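/- arXiv:1807.03349 — 4 statements merged into one kernel-verified Lean document; each statement's English description precedes it below -/
import Mathlib

section
/- Let G be a finitely generated abelian group of positive rank. Suppose H_u, for u in a finite index set U, are subgroups of G and h_u ∈ G are elements, and suppose the complement G \ ⋃_{u∈U} (h_u + H_u) is finite. Then this complement is empty. -/
theorem cosets_cover_of_cofinite' {G : Type*} [AddCommGroup G]
    (hrank : ∃ g : G, ¬ IsOfFinAddOrder g)
    {U : Type*} [Finite U] (H : U → AddSubgroup G) (h : U → G)
    (hfin : (Set.univ \ ⋃ u : U, (fun x => h u + x) '' (H u : Set G)).Finite) :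
    Set.univ \ ⋃ u : U, (fun x => h u + x) '' (H u : Set G) = ∅ := by
  by_contra hne
  obtain ⟨s, hs⟩ := Set.nonempty_iff_ne_empty.mpr hne
  obtain ⟨g, hg⟩ := hrank
  have : Fintype U := Fintype.ofFinite U
  have hsS : s ∉ ⋃ u : U, (fun x => h u + x) '' (H u : Set G) := hs.2
  have hinj : Function.Injective fun n : ℤ => n • g :=
    injective_zsmul_iff_not_isOfFinAddOrder.mpr hg
  -- generator of the "return times" subgroup
  have hcyc : ∀ u, ∃ k : ℤ, (H u).comap ((zmultiplesHom G) g)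
      = AddSubgroup.closure {k} := fun u => Int.subgroup_cyclic _
  choose k hk using hcyc
  have hmem : ∀ u (m : ℤ), m • g ∈ H u ↔ m ∈ AddSubgroup.closure ({k u} : Set ℤ) := by
    intro u m
    rw [← hk u]
    rfl
  set K : ℤ := ∏ u, max |k u| 1 with hK
  have hKpos : 0 < K := Finset.prod_pos (fun u _ => lt_max_of_lt_right one_pos)
  -- each "bad" set of indices is finite
  have key : ∀ u, {j : ℤ | s + (K * j) • g ∈ (fun x => h u + x) '' (H u : Set G)}.Finite := by
    intro u
    by_cases hku : k u = 0
    · -- at most one j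
      apply Set.Subsingleton.finite
      rintro j ⟨x, hx, hxe⟩ j' ⟨x', hx', hxe'⟩
      have hdiff : (K * j - K * j') • g ∈ H u := by
        have hxx : (K * j) • g - (K * j') • g = x - x' := by
          have e1 : s + (K * j) • g = h u + x := hxe.symm
          have e2 : s + (K * j') • g = h u + x' := hxe'.symm
          have := congrArg₂ (· - ·) e1 e2
          simpa [add_sub_add_comm] using this
        have hmm := sub_mem hx hx'
        rw [← hxx] at hmm
        simpa [add_zsmul, neg_zsmul, sub_eq_add_neg] using hmm
      rw [hmem, hku] at hdiff
      simp only [AddSubgroup.closure_singleton_zero, AddSubgroup.mem_bot] at hdiff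
      have hKK : K * j = K * j' := by linarith [sub_eq_zero.mp hdiff]
      exact mul_left_cancel₀ hKpos.ne' hKK
    · -- empty
      convert Set.finite_empty
      ext j
      simp only [Set.mem_setOf_eq, Set.mem_empty_iff_false, iff_false]
      rintro ⟨x, hx, hxe⟩
      have hdvd : k u ∣ K * j := by
        refine Dvd.dvd.mul_right ?_ j
        have h1 : |k u| ∣ K := by
          rw [hK]
          have : max |k u| 1 = |k u| := max_eq_left (Int.one_le_abs (by simpa using hku))
          exact this ▸ Finset.dvd_prod_of_mem _ (Finset.mem_univ u)
        exact (abs_dvd _ _).mp h1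
      have hKjg : (K * j) • g ∈ H u := by
        rw [hmem, AddSubgroup.mem_closure_singleton]
        obtain ⟨c, hc⟩ := hdvd
        exact ⟨c, by rw [smul_eq_mul, mul_comm]; exact hc.symm⟩
      apply hsS
      refine Set.mem_iUnion.mpr ⟨u, ⟨x - (K * j) • g, sub_mem hx hKjg, ?_⟩⟩
      have hhe : h u + x = s + (K * j) • g := hxe
      show h u + (x - (K * j) • g) = s
      calc h u + (x - (K * j) • g) = (h u + x) - (K * j) • g := by abel
        _ = s := by rw [hhe]; abel
  -- conclude: ℤ would be finite
  have hB : (⋃ u, {j : ℤ | s + (K * j) • g ∈ (fun x => h u + x) '' (H u : Set G)}).Finite :=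
    Set.finite_iUnion key
  have hfinj : Function.Injective fun j : ℤ => s + (K * j) • g := by
    intro a b hab
    simp only [add_right_inj] at hab
    exact mul_left_cancel₀ hKpos.ne' (hinj hab)
  have hT : ((fun j : ℤ => s + (K * j) • g) ⁻¹'
      (Set.univ \ ⋃ u : U, (fun x => h u + x) '' (H u : Set G))).Finite :=
    hfin.preimage hfinj.injOn
  have huniv : (Set.univ : Set ℤ).Finite := by
    refine Set.Finite.subset (hB.union hT) fun j _ => ?_
    by_cases hj : s + (K * j) • g ∈ ⋃ u : U, (fun x => h u + x) '' (H u : Set G)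
    · obtain ⟨u, hu⟩ := Set.mem_iUnion.mp hj
      exact Or.inl (Set.mem_iUnion.mpr ⟨u, hu⟩)
    · exact Or.inr ⟨Set.mem_univ _, hj⟩
  exact Set.infinite_univ huniv

/-- Let `G` be a finitely generated abelian group of positive rank (i.e. containing an
element of infinite order).  If `H u` are subgroups of `G` and `h u ∈ G` for `u` in a
finite index set `U`, and the complement `G \ ⋃ u (h u + H u)` is finite, then this
complement is empty. -/
theorem cosets_cover_of_cofinite {G : Type*} [AddCommGroup G] [AddGroup.FG G]
    (hrank : ∃ g : G, ¬ IsOfFinAddOrder g)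
    {U : Type*} [Finite U] (H : U → AddSubgroup G) (h : U → G)
    (hfin : (Set.univ \ ⋃ u : U, (fun x => h u + x) '' (H u : Set G)).Finite) :
    Set.univ \ ⋃ u : U, (fun x => h u + x) '' (H u : Set G) = ∅ :=
  cosets_cover_of_cofinite' hrank H h hfin
end

section
/- For every integer n, the rational number u = (1 - n^2)/(2n^2 + 1) satisfies -1/2 < u ≤ 1, and if n ≠ 0 then u < 0.164; in particular for n ≠ 0 the quantity Δ = (-36u^3 - 54u + 9)/(2u + 1)^3 equals 12n^6 - 3 and is positive. -/
/-!
Put `x = n²`. Then `u = (1 - x)/(2x + 1)`, so `2u + 1 = 3/(2x + 1)` is positive and `u` decreases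
from `1` at `x = 0` towards `-1/2`; for `n ≠ 0` we have `x ≥ 1`, hence `u ≤ 0`. Substituting `u`
into `Δ` clears the denominator `(2u + 1)³ = 27/(2x + 1)³` and leaves `12x³ - 3 ≥ 9`.
-/

section

variable {K : Type*} [Field K]

def conicParameter (x : K) : K := (1 - x) / (2 * x + 1)

def conicDiscriminant (u : K) : K := (-36 * u ^ 3 - 54 * u + 9) / (2 * u + 1) ^ 3

theorem conicDiscriminant_conicParameter [CharZero K] {x : K} (hx : 2 * x + 1 ≠ 0) :
    conicDiscriminant (conicParameter x) = 12 * x ^ 3 - 3 := by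
  have hu : 2 * conicParameter x + 1 = 3 / (2 * x + 1) := by
    unfold conicParameter
    field_simp
    ring
  rw [conicDiscriminant, hu, conicParameter]
  generalize hd : 2 * x + 1 = d at hx ⊢
  field_simp
  rw [← hd]
  ring

variable [LinearOrder K] [IsStrictOrderedRing K] {x : K}

theorem neg_half_lt_conicParameter (hx : 0 ≤ x) : -1 / 2 < conicParameter x := by
  rw [conicParameter, lt_div_iff₀ (by positivity)]
  linarith

theorem conicParameter_le_one (hx : 0 ≤ x) : conicParameter x ≤ 1 := by
  rw [conicParameter, div_le_one (by positivity)]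
  linarith

theorem conicParameter_nonpos (hx : 1 ≤ x) : conicParameter x ≤ 0 :=
  div_nonpos_of_nonpos_of_nonneg (by linarith) (by linarith)

end

/-- For every integer `n`, the rational number `u = (1-n²)/(2n²+1)` satisfies
`-1/2 < u ≤ 1`, and if `n ≠ 0` then `u < 0.164`; in particular for `n ≠ 0` the
discriminant `Δ = (-36u³ - 54u + 9)/(2u+1)³` equals `12n⁶ - 3` and is positive. -/
theorem conic_parameter_bounds (n : ℤ) (u : ℚ)
    (hu : u = (1 - (n : ℚ) ^ 2) / (2 * (n : ℚ) ^ 2 + 1)) :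
    -1/2 < u ∧ u ≤ 1 ∧
    (n ≠ 0 → u < 164/1000 ∧
      (-36 * u ^ 3 - 54 * u + 9) / (2 * u + 1) ^ 3 = 12 * (n : ℚ) ^ 6 - 3 ∧
      0 < (-36 * u ^ 3 - 54 * u + 9) / (2 * u + 1) ^ 3) := by
  obtain rfl : u = conicParameter ((n : ℚ) ^ 2) := hu
  have hx : (0 : ℚ) ≤ (n : ℚ) ^ 2 := sq_nonneg _
  refine ⟨neg_half_lt_conicParameter hx, conicParameter_le_one hx, fun hn => ?_⟩
  have hx1 : (1 : ℚ) ≤ (n : ℚ) ^ 2 := by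
    exact_mod_cast one_le_sq_iff_one_le_abs _ |>.mpr (Int.one_le_abs hn)
  have hΔ : conicDiscriminant (conicParameter ((n : ℚ) ^ 2)) = 12 * (n : ℚ) ^ 6 - 3 := by
    rw [conicDiscriminant_conicParameter (by positivity), ← pow_mul]
  refine ⟨(conicParameter_nonpos hx1).trans_lt (by norm_num), hΔ, ?_⟩
  change 0 < conicDiscriminant _
  have hx3 : (1 : ℚ) ≤ (n : ℚ) ^ 6 := by simpa only [← pow_mul] using one_le_pow₀ (n := 3) hx1
  rw [hΔ]
  linarith
end

section
/- There are only finitely many pairs of integers (m, n) satisfying m^2 = 12n^6 - 3. -/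
open Zsqrtd

/-- Every unit of `ℤ[i]` is a cube. -/
lemma gaussian_unit_is_cube (u : GaussianInt) (hu : IsUnit u) :
    ∃ v : GaussianInt, v ^ 3 = u := by
  have hn : u.norm = 1 := (Zsqrtd.norm_eq_one_iff' (by norm_num) u).mpr hu
  rw [Zsqrtd.norm_def] at hn
  have h : u.re * u.re + u.im * u.im = 1 := by linarith
  have h1 : u.re ≤ 1 := by nlinarith [mul_self_nonneg u.im, mul_self_nonneg (u.re - 1)]
  have h2 : -1 ≤ u.re := by nlinarith [mul_self_nonneg u.im, mul_self_nonneg (u.re + 1)]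
  interval_cases hre : u.re
  · -- re = -1, so im = 0, u = -1, v = -1
    have him : u.im = 0 := by nlinarith [mul_self_nonneg u.im]
    refine ⟨-1, ?_⟩
    have hu1 : u = -1 := by ext <;> simp [hre, him]
    rw [hu1]; ring
  · -- re = 0, im = ±1
    have him : u.im = 1 ∨ u.im = -1 := by
      have : u.im * u.im = 1 := by linarith
      rcases Int.eq_one_or_neg_one_of_mul_eq_one' this with ⟨h', _⟩ | ⟨h', _⟩ <;> tauto
    rcases him with him | him
    · refine ⟨⟨0, -1⟩, ?_⟩
      ext <;> simp [pow_succ, Zsqrtd.re_mul, Zsqrtd.im_mul, hre, him] <;> ring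
    · refine ⟨⟨0, 1⟩, ?_⟩
      ext <;> simp [pow_succ, Zsqrtd.re_mul, Zsqrtd.im_mul, hre, him] <;> ring
  · have him : u.im = 0 := by nlinarith [mul_self_nonneg u.im]
    refine ⟨1, ?_⟩
    have hu1 : u = 1 := by ext <;> simp [hre, him]
    rw [hu1]; ring

/-- The only integer solution of `x² + 1 = 2c³` has `c = 1`. -/
lemma key_lemma (x c : ℤ) (h : x ^ 2 + 1 = 2 * c ^ 3) : c = 1 := by
  -- x is odd
  obtain ⟨t, rfl⟩ : ∃ t, x = 2 * t + 1 := by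
    rcases Int.even_or_odd x with ⟨k, rfl⟩ | ⟨k, hk⟩
    · exfalso
      have h2 : (2 : ℤ) ∣ 1 := ⟨c ^ 3 - 2 * k ^ 2, by linear_combination h⟩
      norm_num at h2
    · exact ⟨k, hk⟩
  have hc3 : c ^ 3 = 2 * t ^ 2 + 2 * t + 1 := by
    have h2 : 2 * c ^ 3 = 2 * (2 * t ^ 2 + 2 * t + 1) := by linear_combination -h
    exact mul_left_cancel₀ two_ne_zero h2
  set α : GaussianInt := ⟨t + 1, -t⟩ with hα
  set β : GaussianInt := ⟨t + 1, t⟩ with hβ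
  have hmul : α * β = (c : GaussianInt) ^ 3 := by
    have h1 : ((c : GaussianInt)) ^ 3 = ((c ^ 3 : ℤ) : GaussianInt) := by push_cast; ring
    rw [h1, hc3]
    ext <;> simp only [hα, hβ, Zsqrtd.re_mul, Zsqrtd.im_mul, Zsqrtd.re_intCast,
      Zsqrtd.im_intCast] <;> ring
  -- α and β are coprime
  have hcop : IsCoprime α β := by
    set g := EuclideanDomain.gcd α β with hg
    have hga : g ∣ α := EuclideanDomain.gcd_dvd_left α β
    have hgb : g ∣ β := EuclideanDomain.gcd_dvd_right α β
    have h2 : (2 : GaussianInt) = α * ⟨1, -1⟩ + β * ⟨1, 1⟩ := by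
      ext <;> simp [hα, hβ, Zsqrtd.re_mul, Zsqrtd.im_mul] <;> ring
    have hg2 : g ∣ (2 : GaussianInt) := h2 ▸ dvd_add (hga.mul_right _) (hgb.mul_right _)
    have hnormdvd : ∀ z w : GaussianInt, z ∣ w → z.norm ∣ w.norm := by
      rintro z w ⟨e, rfl⟩; rw [Zsqrtd.norm_mul]; exact dvd_mul_right _ _
    have hn4 : g.norm ∣ 4 := by
      have := hnormdvd _ _ hg2
      simpa [Zsqrtd.norm_def] using this
    have hnα : g.norm ∣ 2 * t ^ 2 + 2 * t + 1 := by
      have := hnormdvd _ _ hga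
      have hα' : α.norm = 2 * t ^ 2 + 2 * t + 1 := by
        rw [Zsqrtd.norm_def]; simp [hα]; ring
      rwa [hα'] at this
    have hodd : ¬ (2 : ℤ) ∣ g.norm := by
      intro h2d
      have : (2 : ℤ) ∣ 2 * t ^ 2 + 2 * t + 1 := h2d.trans hnα
      obtain ⟨e, he⟩ := this
      have : (2 : ℤ) ∣ 1 := ⟨e - t ^ 2 - t, by linear_combination he⟩
      norm_num at this
    have hnn : 0 ≤ g.norm := Zsqrtd.norm_nonneg (by norm_num) g
    have hgnorm1 : g.norm = 1 := by
      have hle : g.norm ≤ 4 := Int.le_of_dvd (by norm_num) hn4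
      interval_cases hv : g.norm <;> omega
    have hunit : IsUnit g := (Zsqrtd.norm_eq_one_iff' (by norm_num) g).mp hgnorm1
    obtain ⟨v, hv⟩ := isUnit_iff_exists_inv.mp hunit
    have hbez := EuclideanDomain.gcd_eq_gcd_ab α β
    exact ⟨EuclideanDomain.gcdA α β * v, EuclideanDomain.gcdB α β * v, by
      linear_combination v * hbez.symm + hv⟩
  obtain ⟨γ, hγ⟩ := exists_associated_pow_of_mul_eq_pow' hcop hmul
  obtain ⟨u, hu⟩ := hγ
  obtain ⟨v, hv3⟩ := gaussian_unit_is_cube u u.isUnit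
  have hδ : (γ * v) ^ 3 = α := by rw [mul_pow, hv3, hu]
  set a : ℤ := (γ * v).re with ha
  set b : ℤ := (γ * v).im with hb
  have hre : a ^ 3 - 3 * a * b ^ 2 = t + 1 := by
    have := congrArg Zsqrtd.re hδ
    simp [pow_succ, Zsqrtd.re_mul, Zsqrtd.im_mul, hα, ← ha, ← hb] at this
    linear_combination this
  have him : 3 * a ^ 2 * b - b ^ 3 = -t := by
    have := congrArg Zsqrtd.im hδ
    simp [pow_succ, Zsqrtd.re_mul, Zsqrtd.im_mul, hα, ← ha, ← hb] at this
    linear_combination this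
  have hkey : (a - b) * (a ^ 2 + 4 * a * b + b ^ 2) = 1 := by
    linear_combination hre + him
  rcases Int.eq_one_or_neg_one_of_mul_eq_one' hkey with ⟨h1, h2⟩ | ⟨h1, h2⟩
  · -- a = b + 1
    have hab : a = b + 1 := by omega
    have hbb : b * (b + 1) = 0 := by nlinarith [h2, hab]
    rcases mul_eq_zero.mp hbb with hb0 | hb1
    · -- b = 0, a = 1, t = 0
      have ht : t = 0 := by
        have := hre
        rw [hb0, hab, hb0] at this
        norm_num at this
        omega
      have : c ^ 3 = 1 := by rw [hc3, ht]; ring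
      nlinarith [sq_nonneg (c - 1), sq_nonneg (c + 1), sq_nonneg c]
    · -- b = -1, a = 0
      have hbm : b = -1 := by omega
      have ht : t = -1 := by
        have := hre
        rw [hbm, hab, hbm] at this
        norm_num at this
        omega
      have : c ^ 3 = 1 := by rw [hc3, ht]; ring
      nlinarith [sq_nonneg (c - 1), sq_nonneg (c + 1), sq_nonneg c]
  · -- a = b - 1 : impossible
    exfalso
    have hab : a = b - 1 := by omega
    nlinarith [h2, hab, sq_nonneg (2 * b - 1)]

/-- There are only finitely many pairs of integers `(m, n)` with `m² = 12n⁶ - 3`. -/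
theorem finitely_many_integral_points_hyperelliptic :
    {p : ℤ × ℤ | p.1 ^ 2 = 12 * p.2 ^ 6 - 3}.Finite := by
  apply Set.Finite.subset (Set.toFinite ({((3:ℤ),(1:ℤ)), (3,-1), (-3,1), (-3,-1)} : Set (ℤ × ℤ)))
  rintro ⟨m, n⟩ h
  simp only [Set.mem_setOf_eq] at h
  -- 3 ∣ m
  obtain ⟨k, rfl⟩ : (3 : ℤ) ∣ m := by
    refine Int.prime_three.dvd_of_dvd_pow (n := 2) ⟨4 * n ^ 6 - 1, by linear_combination h⟩
  have hk : 3 * k ^ 2 = 4 * n ^ 6 - 1 := by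
    have h9 : 3 * (3 * k ^ 2) = 3 * (4 * n ^ 6 - 1) := by linear_combination h
    exact mul_left_cancel₀ (by norm_num) h9
  -- n is odd
  have hnodd : Odd n := by
    rcases Int.even_or_odd n with ⟨j, rfl⟩ | hodd
    · exfalso
      rcases Int.even_or_odd k with ⟨l, rfl⟩ | ⟨l, rfl⟩
      · have : (2 : ℤ) ∣ 1 := ⟨128 * j ^ 6 - 6 * l ^ 2, by linear_combination hk⟩
        norm_num at this
      · obtain ⟨e, he⟩ := Int.even_mul_succ_self l
        have h4 : 4 * (3 * l ^ 2 + 3 * l + 1) = 4 * (64 * j ^ 6) := by linear_combination hk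
        have h4' : 3 * l ^ 2 + 3 * l + 1 = 64 * j ^ 6 :=
          mul_left_cancel₀ (by norm_num) h4
        have : (2 : ℤ) ∣ 1 := ⟨32 * j ^ 6 - 3 * e, by linear_combination h4' - 3 * he⟩
        norm_num at this
    · exact hodd
  have hn3odd : Odd (n ^ 3) := hnodd.pow
  set s : ℤ := n ^ 3 with hs
  have hfact : (2 * s - 1) * (2 * s + 1) = 3 * k ^ 2 := by
    rw [hs]; linear_combination -hk
  have hcop : IsCoprime (2 * s - 1) (2 * s + 1) := ⟨s, 1 - s, by ring⟩
  have h3dvd : (3 : ℤ) ∣ (2 * s - 1) * (2 * s + 1) := ⟨k ^ 2, hfact⟩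
  have hn1 : n = 1 ∨ n = -1 := by
    rcases (Int.prime_three.dvd_mul.mp h3dvd) with ⟨w, hw⟩ | ⟨w, hw⟩
    · -- 3 ∣ 2s - 1 ; then 2s + 1 = ±r²
      have hk2 : (2 * s + 1) * w = k ^ 2 := by
        have : 3 * ((2 * s + 1) * w) = 3 * k ^ 2 := by linear_combination hfact - (2 * s + 1) * hw
        exact mul_left_cancel₀ (by norm_num) this
      have hcop' : IsCoprime (2 * s + 1) w := by
        have := hcop.symm
        rw [hw] at this
        exact this.of_mul_right_right
      obtain ⟨r, hr | hr⟩ := Int.sq_of_isCoprime hcop' hk2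
      · -- 2s + 1 = r² : r odd, leads to n even, contradiction
        exfalso
        obtain ⟨q, hq⟩ : Odd r := by
          rcases Int.even_or_odd r with ⟨q, rfl⟩ | hodd
          · exfalso
            have : (2 : ℤ) ∣ 1 := ⟨2 * q ^ 2 - s, by linear_combination hr⟩
            norm_num at this
          · exact hodd
        obtain ⟨e, he⟩ := hn3odd
        have : (4 : ℤ) ∣ 2 :=
          ⟨q ^ 2 + q - e, by linear_combination hr - 2 * he + (r + 2 * q + 1) * hq⟩
        norm_num at this
      · -- 2s + 1 = -r² : r² + 1 = 2(-n)³
        have hkey : r ^ 2 + 1 = 2 * (-n) ^ 3 := by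
          rw [hs] at hr; linear_combination hr
        right
        have := key_lemma r (-n) hkey
        omega
    · -- 3 ∣ 2s + 1 ; then 2s - 1 = ±r²
      have hk2 : (2 * s - 1) * w = k ^ 2 := by
        have : 3 * ((2 * s - 1) * w) = 3 * k ^ 2 := by linear_combination hfact - (2 * s - 1) * hw
        exact mul_left_cancel₀ (by norm_num) this
      have hcop' : IsCoprime (2 * s - 1) w := by
        have := hcop
        rw [hw] at this
        exact this.of_mul_right_right
      obtain ⟨r, hr | hr⟩ := Int.sq_of_isCoprime hcop' hk2
      · -- 2s - 1 = r² : r² + 1 = 2n³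
        have hkey : r ^ 2 + 1 = 2 * n ^ 3 := by
          rw [hs] at hr; linear_combination -hr
        left
        exact key_lemma r n hkey
      · -- 2s - 1 = -r² : r odd, n even contradiction
        exfalso
        obtain ⟨q, hq⟩ : Odd r := by
          rcases Int.even_or_odd r with ⟨q, rfl⟩ | hodd
          · exfalso
            have : (2 : ℤ) ∣ 1 := ⟨s + 2 * q ^ 2, by linear_combination -hr⟩
            norm_num at this
          · exact hodd
        obtain ⟨e, he⟩ := hn3odd
        have : (4 : ℤ) ∣ 2 :=
          ⟨-(q ^ 2 + q + e), by linear_combination hr - 2 * he - (r + 2 * q + 1) * hq⟩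
        norm_num at this
  -- conclude
  have hn6 : n ^ 6 = 1 := by rcases hn1 with rfl | rfl <;> norm_num
  have hm : (3 * k - 3) * (3 * k + 3) = 0 := by
    rw [hn6] at h; linear_combination h
  rcases mul_eq_zero.mp hm with hm | hm
  · have : k = 1 := by omega
    subst this
    rcases hn1 with rfl | rfl <;> simp
  · have : k = -1 := by omega
    subst this
    rcases hn1 with rfl | rfl <;> simp
end

section
/- For all real numbers r, t, one has r^2 + rt + t^2 - r - t + 1 ≥ 0 and more generally for the inequality used for the pencil C_n: for n sufficiently large, every real point (r, t) on the affine conic n^2(-r^2 + 2rt - r - t^2 + t - 1) + r^2 + rt - 2r + t^2 - t + 1 = 0 satisfies 3t^2 - 3tr + r^2 + 2r - 2 > 0. -/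
/-!
Twice `r² + rt + t² - r - t + 1` is `(r + t)² + (r - 1)² + (t - 1)²`, which cannot vanish.

Completing the square, `leading = -(r - t + 1/2)² - 3/4 ≤ -3/4`, so every real point of `C_n`
has `base = -n² · leading ≥ 3n²/4`. On the closed elliptical region `ellipse ≤ 0` the form `base`
is bounded: `170 - base + 12 · ellipse` is a positive definite quadratic, so `base ≤ 170` there.
Hence for `n ≥ 16` (where `3n²/4 ≥ 192`) the conic misses the region.
-/

namespace ConicPencil

/-- The pencil is `C_n : n² · leading r t + base r t = 0`. -/
def leading (r t : ℝ) : ℝ := -r ^ 2 + 2 * r * t - r - t ^ 2 + t - 1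

def base (r t : ℝ) : ℝ := r ^ 2 + r * t - 2 * r + t ^ 2 - t + 1

def ellipse (r t : ℝ) : ℝ := 3 * t ^ 2 - 3 * t * r + r ^ 2 + 2 * r - 2

theorem leading_le (r t : ℝ) : leading r t ≤ -3 / 4 := by
  have h : leading r t = -(r - t + 1 / 2) ^ 2 - 3 / 4 := by unfold leading; ring
  rw [h]
  linarith [sq_nonneg (r - t + 1 / 2)]

theorem base_le_of_ellipse_nonpos {r t : ℝ} (h : ellipse r t ≤ 0) : base r t ≤ 170 := by
  unfold base ellipse at *
  nlinarith [sq_nonneg (22 * r - 37 * t + 26), sq_nonneg (171 * t + 984)]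

theorem pencil_neg_of_ellipse_nonpos {n r t : ℝ} (hn : 16 ≤ n) (h : ellipse r t ≤ 0) :
    n ^ 2 * leading r t + base r t < 0 := by
  have hn2 : 256 ≤ n ^ 2 := by nlinarith
  nlinarith [leading_le r t, base_le_of_ellipse_nonpos h]

end ConicPencil

theorem sq_add_mul_add_sq_sub_sub_add_one_pos (r t : ℝ) :
    0 < r ^ 2 + r * t + t ^ 2 - r - t + 1 := by
  nlinarith [sq_nonneg (r + t), sq_nonneg (r - 1), sq_nonneg (t - 1)]

open ConicPencil in
/-- For all real `r, t` one has `r² + rt + t² - r - t + 1 ≥ 0`; and for all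
sufficiently large `n`, every real point `(r,t)` of the affine conic
`n²(-r² + 2rt - r - t² + t - 1) + r² + rt - 2r + t² - t + 1 = 0` satisfies
`3t² - 3tr + r² + 2r - 2 > 0`. -/
theorem conic_avoids_ellipse :
    (∀ r t : ℝ, 0 ≤ r ^ 2 + r * t + t ^ 2 - r - t + 1) ∧
    (∃ N : ℕ, ∀ n : ℕ, N ≤ n → ∀ r t : ℝ,
      (n : ℝ) ^ 2 * (-r ^ 2 + 2 * r * t - r - t ^ 2 + t - 1) +
        r ^ 2 + r * t - 2 * r + t ^ 2 - t + 1 = 0 →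
      0 < 3 * t ^ 2 - 3 * t * r + r ^ 2 + 2 * r - 2) := by
  refine ⟨fun r t => (sq_add_mul_add_sq_sub_sub_add_one_pos r t).le, 16, fun n hn r t hC => ?_⟩
  by_contra! hE
  have hneg := pencil_neg_of_ellipse_nonpos (n := n) (by exact_mod_cast hn) hE
  unfold leading base at hneg
  linarith
end
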